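/- arXiv:1310.6851 — 2 statements merged into one kernel-verified Lean document; each statement's English description precedes it below -/
import Mathlib

section
/- Under the Assumption with G a finite group, assume that the stabilizer of a_1 in G is trivial, i.e., G_{a_1} = {id}. Then the polynomials f_1 = ∏_{σ∈G} (y_1 − σ·a_1) and, for 2 ≤ i ≤ n, f_i = y_i − Σ_{σ∈G} (σ·a_i) · ∏_{τ∈G∖{σ}} (y_1 − τ·a_1)/(σ·a_1 − τ·a_1), form a reduced Gröbner basis of the Derksen ideal D_{a_1,…,a_n} ⊆ L[y_1,…,y_n] with respect to every monomial ordering satisfying y_1^k < y_i for all i, k > 1. Moreover, with a := discr(f_1) ∈ R^G ∖ {0} the discriminant of f_1 as a polynomial in y_1, one has a·f_i ∈ R[y_1,…,y_n] for all i. -/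
/-!
Put `b σ = σ • a₁`; these are pairwise distinct because `a₁` has trivial stabilizer, and the
Derksen ideal is the vanishing ideal of the finitely many points `σ • a`. In these terms `f₁` is
the nodal polynomial `∏ σ, (y₁ - b σ)` and `f_i = y_i - p_i(y₁)`, where `p_i` is the Lagrange
interpolant of `σ • a_i` at the nodes `b σ`; both vanish at every point `σ • a`.

Under the order hypothesis, `lm f₁ = y₁ ^ |G|`, `lm f_i = y_i`, and a polynomial whose leading
monomial is a power of `y₁` only involves `y₁`. So a nonzero element of the ideal either has a
leading monomial containing some `y_i`, or is a univariate polynomial with the `|G|` distinct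
roots `b σ`, hence of degree at least `|G|`. Either way one of the `lm f_i` divides its leading
monomial, and the division algorithm shows that the `f_i` generate the ideal. All non-leading
monomials of the `f_i` are powers `y₁ ^ k` with `k < |G|`, which makes the basis reduced.

The denominators of `f_i` are the products `∏ τ ≠ σ, (b σ - b τ)`, and the discriminant is the
product of all of them, so multiplying by it clears every denominator inside `R`.
-/

open MvPolynomial
noncomputable section

namespace Derksen

variable {L : Type*} [Field L]

/-- Coefficient-wise action of a group element on a multivariate polynomial
(the variables are fixed). -/
def polyAct (G : Type*) [Group G] [MulSemiringAction G L] {n : ℕ} (σ : G)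
    (f : MvPolynomial (Fin n) L) : MvPolynomial (Fin n) L :=
  MvPolynomial.map (MulSemiringAction.toRingHom G L σ) f

/-- The Derksen ideal `D_{a_1,…,a_n} = ⋂_{σ ∈ G} (y_1 − σ·a_1, …, y_n − σ·a_n)`. -/
def derksenIdeal (G : Type*) [Group G] [MulSemiringAction G L] {n : ℕ}
    (a : Fin n → L) : Ideal (MvPolynomial (Fin n) L) :=
  ⨅ σ : G, Ideal.span (Set.range fun i => X i - C (σ • a i))

/-- The leading monomial of a multivariate polynomial with respect to a
monomial order (it is `0` for the zero polynomial). -/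
def lm {n : ℕ} (m : MonomialOrder (Fin n)) {S : Type*} [CommSemiring S]
    (f : MvPolynomial (Fin n) S) : Fin n →₀ ℕ :=
  m.toSyn.symm (f.support.sup fun d => m.toSyn d)

/-- The leading coefficient with respect to a monomial order. -/
def lc {n : ℕ} (m : MonomialOrder (Fin n)) {S : Type*} [CommSemiring S]
    (f : MvPolynomial (Fin n) S) : S :=
  f.coeff (lm m f)

/-- A (finite) Gröbner basis of an ideal of a polynomial ring over a field,
with respect to a monomial order: it consists of nonzero elements of the ideal,
generates it, and the leading monomial of every nonzero element of the ideal is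
divisible by the leading monomial of some basis element. -/
structure IsGroebnerBasis {n : ℕ} (m : MonomialOrder (Fin n))
    (E : Ideal (MvPolynomial (Fin n) L)) (B : Finset (MvPolynomial (Fin n) L)) : Prop where
  zero_not_mem : (0 : MvPolynomial (Fin n) L) ∉ B
  subset : (B : Set (MvPolynomial (Fin n) L)) ⊆ E
  span_eq : Ideal.span (B : Set (MvPolynomial (Fin n) L)) = E
  lm_dvd : ∀ f ∈ E, f ≠ 0 → ∃ g ∈ B, lm m g ≤ lm m f

/-- A reduced Gröbner basis: all elements are monic and no monomial occurring in
a basis element is divisible by the leading monomial of another basis element. -/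
structure IsReducedGroebnerBasis {n : ℕ} (m : MonomialOrder (Fin n))
    (E : Ideal (MvPolynomial (Fin n) L)) (B : Finset (MvPolynomial (Fin n) L))
    extends IsGroebnerBasis m E B : Prop where
  monic : ∀ g ∈ B, lc m g = 1
  reduced : ∀ g ∈ B, ∀ g' ∈ B, g' ≠ g → ∀ d ∈ g.support, ¬ lm m g' ≤ d

/-- The `K`-subalgebra of `L` (as a subring) generated by the coefficients of
the polynomials of `B`. -/
def coeffAlgebra (K : Subring L) {n : ℕ} (B : Finset (MvPolynomial (Fin n) L)) :
    Subring L :=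
  Subring.closure (↑K ∪ {x : L | ∃ g ∈ B, ∃ d : Fin n →₀ ℕ, coeff d g = x})

end Derksen

namespace Derksen

open scoped Classical MonomialOrder

section Groebner

variable {ι L : Type*} [Field L] {m : MonomialOrder ι}

theorem span_eq_of_forall_exists_degree_le {I : Ideal (MvPolynomial ι L)}
    {B : Set (MvPolynomial ι L)} (hBI : B ⊆ I) (hB : ∀ b ∈ B, m.leadingCoeff b ≠ 0)
    (hdeg : ∀ f ∈ I, f ≠ 0 → ∃ b ∈ B, m.degree b ≤ m.degree f) :
    Ideal.span B = I := by
  refine le_antisymm (Ideal.span_le.mpr hBI) fun f hf => ?_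
  obtain ⟨g, r, hfr, -, hr⟩ := m.div_set (fun b hb => (hB b hb).isUnit) f
  have hcomb : Finsupp.linearCombination _ (fun b : B => (b : MvPolynomial ι L)) g ∈
      Ideal.span B := by
    have h := (Finsupp.range_linearCombination (R := MvPolynomial ι L)
      (v := fun b : B => (b : MvPolynomial ι L))).le ⟨g, rfl⟩
    rwa [Subtype.range_coe] at h
  have hr0 : r = 0 := by
    by_contra hr0
    have hrI : r ∈ I := by
      rw [eq_sub_of_add_eq' hfr.symm]
      exact sub_mem hf (Ideal.span_le.mpr hBI hcomb)
    obtain ⟨b, hb, hle⟩ := hdeg r hrI hr0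
    exact hr _ (m.degree_mem_support hr0) b hb hle
  rw [hfr, hr0, add_zero]
  exact hcomb

end Groebner

section Univariate

variable {ι R : Type*} [CommSemiring R] {i : ι}

lemma toMvPolynomial_monomial (k : ℕ) (c : R) :
    (Polynomial.monomial k c).toMvPolynomial i = monomial (Finsupp.single i k) c := by
  simp [Polynomial.toMvPolynomial, Polynomial.aeval_monomial, C_mul_X_pow_eq_monomial]

lemma coeff_toMvPolynomial (p : Polynomial R) (d : ι →₀ ℕ) :
    coeff d (p.toMvPolynomial i) = if d = Finsupp.single i (d i) then p.coeff (d i) else 0 := by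
  conv_lhs => rw [p.as_sum_support]
  simp only [map_sum, toMvPolynomial_monomial, coeff_sum, coeff_monomial]
  split_ifs with hd
  · rw [Finset.sum_eq_single (d i)]
    · rw [if_pos hd.symm]
    · intro k _ hk
      rw [if_neg]
      rintro rfl
      simp at hk
    · intro hk
      rw [Polynomial.notMem_support_iff.mp hk, ite_self]
  · refine Finset.sum_eq_zero fun k _ => if_neg ?_
    rintro rfl
    simp at hd

lemma coeff_single_toMvPolynomial (p : Polynomial R) (k : ℕ) :
    coeff (Finsupp.single i k) (p.toMvPolynomial i) = p.coeff k := by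
  simp [coeff_toMvPolynomial]

lemma mem_support_toMvPolynomial {p : Polynomial R} {d : ι →₀ ℕ} :
    d ∈ (p.toMvPolynomial i).support ↔ ∃ k ∈ p.support, Finsupp.single i k = d := by
  rw [mem_support_iff, coeff_toMvPolynomial]
  split_ifs with hd
  · exact ⟨fun h => ⟨d i, Polynomial.mem_support_iff.mpr h, hd.symm⟩,
      by rintro ⟨k, hk, rfl⟩; simpa using hk⟩
  · simp only [ne_eq, not_true_eq_false, false_iff, not_exists, not_and]
    rintro k - rfl
    simp at hd

lemma exists_toMvPolynomial_eq {f : MvPolynomial ι R}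
    (hf : ∀ d ∈ f.support, d = Finsupp.single i (d i)) :
    ∃ p : Polynomial R, p.toMvPolynomial i = f := by
  refine ⟨∑ d ∈ f.support, Polynomial.monomial (d i) (coeff d f), ?_⟩
  conv_rhs => rw [f.as_sum]
  simp only [map_sum, toMvPolynomial_monomial]
  exact Finset.sum_congr rfl fun d hd => by rw [← hf d hd]

variable (m : MonomialOrder ι)

lemma degree_toMvPolynomial (p : Polynomial R) :
    m.degree (p.toMvPolynomial i) = Finsupp.single i p.natDegree := by
  rcases eq_or_ne p 0 with rfl | hp
  · simp
  apply m.toSyn.injective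
  apply le_antisymm
  · refine m.degree_le_iff.mpr fun d hd => ?_
    obtain ⟨k, hk, rfl⟩ := mem_support_toMvPolynomial.mp hd
    exact m.toSyn_monotone (Finsupp.single_le_single.mpr (Polynomial.le_natDegree_of_mem_supp k hk))
  · apply m.le_degree
    rw [mem_support_iff, coeff_single_toMvPolynomial]
    exact Polynomial.leadingCoeff_ne_zero.mpr hp

lemma leadingCoeff_toMvPolynomial (p : Polynomial R) :
    m.leadingCoeff (p.toMvPolynomial i) = p.leadingCoeff := by
  rw [MonomialOrder.leadingCoeff, degree_toMvPolynomial, coeff_single_toMvPolynomial]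
  rfl

end Univariate

section Vanishing

variable {ι R : Type*} [CommRing R]

lemma sub_C_eval_mem_span_X_sub_C (v : ι → R) (f : MvPolynomial ι R) :
    f - C (eval v f) ∈ Ideal.span (Set.range fun i => X i - C (v i)) := by
  induction f using MvPolynomial.induction_on with
  | C r => simp
  | add p q hp hq =>
    rw [map_add, map_add, add_sub_add_comm]
    exact add_mem hp hq
  | mul_X p i hp =>
    have h : p * X i - C (eval v (p * X i)) =
        p * (X i - C (v i)) + (p - C (eval v p)) * C (v i) := by
      rw [map_mul, eval_X, map_mul]; ring
    rw [h]
    exact add_mem (Ideal.mul_mem_left _ _ (Ideal.subset_span ⟨i, rfl⟩))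
      (Ideal.mul_mem_right _ _ hp)

lemma mem_span_X_sub_C_iff (v : ι → R) (f : MvPolynomial ι R) :
    f ∈ Ideal.span (Set.range fun i => X i - C (v i)) ↔ eval v f = 0 := by
  refine ⟨fun hf => ?_, fun hf => by simpa [hf] using sub_C_eval_mem_span_X_sub_C v f⟩
  have hker : Ideal.span (Set.range fun i => X i - C (v i)) ≤ RingHom.ker (eval v) := by
    rw [Ideal.span_le]
    rintro _ ⟨i, rfl⟩
    simp
  exact hker hf

end Vanishing

lemma derksenIdeal_eq_vanishingIdeal {G L : Type*} [Group G] [Field L] [MulSemiringAction G L]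
    {n : ℕ} (a : Fin n → L) :
    derksenIdeal G a = vanishingIdeal L (Set.range fun (σ : G) i => σ • a i) := by
  ext f
  simp only [derksenIdeal, Submodule.mem_iInf, mem_span_X_sub_C_iff, mem_vanishingIdeal_iff,
    Set.forall_mem_range]
  rfl

section Points

variable {ι G L : Type*} [Fintype G] [Field L] {m : MonomialOrder ι} {j : ι}

lemma eq_single_of_mem_support_of_degree_eq_single (hm : ∀ (k : ℕ) (i : ι), i ≠ j →
      Finsupp.single j k ≺[m] Finsupp.single i 1)
    {f : MvPolynomial ι L} {k : ℕ} (hf : m.degree f = Finsupp.single j k)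
    {d : ι →₀ ℕ} (hd : d ∈ f.support) : d = Finsupp.single j (d j) := by
  ext i
  by_cases hi : i = j
  · simp [hi]
  rw [Finsupp.single_eq_of_ne hi]
  by_contra hdi
  have hle : m.toSyn (Finsupp.single i 1) ≤ m.toSyn d :=
    m.toSyn_monotone (Finsupp.single_le_iff.mpr (Nat.one_le_iff_ne_zero.mpr hdi))
  have hd' : m.toSyn d ≤ m.toSyn (Finsupp.single j k) := hf ▸ m.le_degree hd
  exact (hm k i hi).not_ge (hle.trans hd')

theorem exists_single_le_degree_of_mem_vanishingIdeal
    (hm : ∀ (k : ℕ) (i : ι), i ≠ j → Finsupp.single j k ≺[m] Finsupp.single i 1)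
    {P : G → ι → L} (hP : Function.Injective fun σ => P σ j)
    {f : MvPolynomial ι L} (hf : f ∈ vanishingIdeal L (Set.range P)) (hf0 : f ≠ 0) :
    (∃ i ≠ j, Finsupp.single i 1 ≤ m.degree f) ∨
      Finsupp.single j (Fintype.card G) ≤ m.degree f := by
  by_cases! h : ∃ i ≠ j, Finsupp.single i 1 ≤ m.degree f
  · exact .inl h
  right
  have hdeg : m.degree f = Finsupp.single j (m.degree f j) := by
    ext i
    by_cases hi : i = j
    · simp [hi]
    · simpa [Finsupp.single_eq_of_ne hi, Finsupp.single_le_iff] using h i hi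
  obtain ⟨p, rfl⟩ := exists_toMvPolynomial_eq fun d hd => eq_single_of_mem_support_of_degree_eq_single hm hdeg hd
  have hp0 : p ≠ 0 := by rintro rfl; exact hf0 (map_zero _)
  have hroots : ∀ σ, p.eval (P σ j) = 0 := fun σ => by
    simpa [coe_aeval_eq_eval, eval_toMvPolynomial] using hf (P σ) ⟨σ, rfl⟩
  have hcard : Fintype.card G ≤ p.natDegree :=
    not_lt.mp fun hlt =>
      hp0 (Polynomial.eq_zero_of_natDegree_lt_card_of_eval_eq_zero p hP hroots hlt)
  rw [degree_toMvPolynomial]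
  exact Finsupp.single_le_single.mpr hcard

end Points

section Lagrange

variable {ι G L : Type*} [Fintype G] [Field L] {j : ι}

lemma toMvPolynomial_nodal (v : G → L) :
    (Lagrange.nodal Finset.univ v).toMvPolynomial j = ∏ σ, (X j - C (v σ)) := by
  simp [Lagrange.nodal, map_prod]

lemma toMvPolynomial_interpolate (v r : G → L) :
    (Lagrange.interpolate Finset.univ v r).toMvPolynomial j =
      ∑ σ, C (r σ) * ∏ τ ∈ Finset.univ.erase σ, (C ((v σ - v τ)⁻¹) * (X j - C (v τ))) := by
  simp [Lagrange.basis, Lagrange.basisDivisor, map_prod]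

lemma mem_support_toMvPolynomial_nodal {v : G → L} {d : ι →₀ ℕ}
    (hd : d ∈ ((Lagrange.nodal Finset.univ v).toMvPolynomial j).support) :
    d = Finsupp.single j (Fintype.card G) ∨ ∃ k < Fintype.card G, d = Finsupp.single j k := by
  obtain ⟨k, hk, rfl⟩ := mem_support_toMvPolynomial.mp hd
  have hkN : k ≤ Fintype.card G := by
    simpa using Polynomial.le_natDegree_of_mem_supp k hk
  rcases hkN.lt_or_eq with hlt | rfl
  · exact .inr ⟨k, hlt, rfl⟩
  · exact .inl rfl

lemma mem_support_X_sub_toMvPolynomial_interpolate {v : G → L} (hv : Function.Injective v)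
    (i : ι) (r : G → L) {d : ι →₀ ℕ}
    (hd : d ∈ (X i - (Lagrange.interpolate Finset.univ v r).toMvPolynomial j).support) :
    d = Finsupp.single i 1 ∨ ∃ k < Fintype.card G, d = Finsupp.single j k := by
  rcases Finset.mem_union.mp (support_sub _ _ _ hd) with hX | hq
  · exact .inl (by simpa [support_X] using hX)
  · obtain ⟨k, hk, rfl⟩ := mem_support_toMvPolynomial.mp hq
    have hkN := (Polynomial.le_degree_of_mem_supp k hk).trans_lt
      (Lagrange.degree_interpolate_lt r hv.injOn)
    exact .inr ⟨k, by simpa using hkN, rfl⟩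

variable {P : G → ι → L}

lemma toMvPolynomial_nodal_mem_vanishingIdeal :
    (Lagrange.nodal Finset.univ fun σ => P σ j).toMvPolynomial j ∈
      vanishingIdeal L (Set.range P) := by
  rintro _ ⟨σ, rfl⟩
  change eval (P σ) _ = 0
  rw [eval_toMvPolynomial]
  exact Lagrange.eval_nodal_at_node (v := fun σ => P σ j) (Finset.mem_univ σ)

lemma X_sub_toMvPolynomial_interpolate_mem_vanishingIdeal
    (hP : Function.Injective fun σ => P σ j) (i : ι) :
    X i - (Lagrange.interpolate Finset.univ (fun σ => P σ j) fun σ => P σ i).toMvPolynomial j ∈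
      vanishingIdeal L (Set.range P) := by
  rintro _ ⟨σ, rfl⟩
  change eval (P σ) _ = 0
  rw [map_sub, eval_X, eval_toMvPolynomial,
    Lagrange.eval_interpolate_at_node _ hP.injOn (Finset.mem_univ σ), sub_self]

variable (m : MonomialOrder ι)

lemma degree_toMvPolynomial_nodal (v : G → L) :
    m.degree ((Lagrange.nodal Finset.univ v).toMvPolynomial j) =
      Finsupp.single j (Fintype.card G) := by
  rw [degree_toMvPolynomial, Lagrange.natDegree_nodal, Finset.card_univ]

lemma leadingCoeff_toMvPolynomial_nodal (v : G → L) :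
    m.leadingCoeff ((Lagrange.nodal Finset.univ v).toMvPolynomial j) = 1 := by
  rw [leadingCoeff_toMvPolynomial, Lagrange.nodal_monic.leadingCoeff]

variable {m}

lemma degree_X_sub_toMvPolynomial
    (hm : ∀ (k : ℕ) (i : ι), i ≠ j → Finsupp.single j k ≺[m] Finsupp.single i 1)
    {i : ι} (hi : i ≠ j) (q : Polynomial L) :
    m.degree (X i - q.toMvPolynomial j) = Finsupp.single i 1 ∧
      m.leadingCoeff (X i - q.toMvPolynomial j) = 1 := by
  have hlt : m.degree (q.toMvPolynomial j) ≺[m] m.degree (X i : MvPolynomial ι L) := by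
    rw [degree_toMvPolynomial, m.degree_X]
    exact hm _ i hi
  exact ⟨(m.degree_sub_of_lt hlt).trans m.degree_X,
    (m.leadingCoeff_sub_of_lt hlt).trans m.leadingCoeff_X⟩

end Lagrange

section ReducedBasis

variable {n : ℕ} {L : Type*} [Field L] {m : MonomialOrder (Fin n)}

lemma lm_eq_degree (f : MvPolynomial (Fin n) L) : lm m f = m.degree f := rfl

lemma lc_eq_leadingCoeff (f : MvPolynomial (Fin n) L) : lc m f = m.leadingCoeff f := rfl

theorem isReducedGroebnerBasis_of_degree_eq {I : Ideal (MvPolynomial (Fin n) L)}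
    {F : Fin n → MvPolynomial (Fin n) L} {j : Fin n} {N : ℕ} (hN : 0 < N)
    (hFI : ∀ i, F i ∈ I) (hmonic : ∀ i, m.leadingCoeff (F i) = 1)
    (hdegj : m.degree (F j) = Finsupp.single j N)
    (hdegi : ∀ i ≠ j, m.degree (F i) = Finsupp.single i 1)
    (htail : ∀ i, ∀ d ∈ (F i).support, d = m.degree (F i) ∨ ∃ k < N, d = Finsupp.single j k)
    (hI : ∀ f ∈ I, f ≠ 0 →
      (∃ i ≠ j, Finsupp.single i 1 ≤ m.degree f) ∨ Finsupp.single j N ≤ m.degree f) :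
    IsReducedGroebnerBasis m I (Finset.univ.image F) := by
  have hF0 : ∀ i, F i ≠ 0 := fun i h => by simpa [h] using hmonic i
  have hdvd : ∀ f ∈ I, f ≠ 0 → ∃ i, m.degree (F i) ≤ m.degree f := by
    intro f hf hf0
    rcases hI f hf hf0 with ⟨i, hi, hle⟩ | hle
    · exact ⟨i, hdegi i hi ▸ hle⟩
    · exact ⟨j, hdegj ▸ hle⟩
  have hlead : ∀ i d, m.degree (F i) ≤ d → 0 < d i ∧ (i = j → N ≤ d j) := by
    intro i d hle
    by_cases hi : i = j
    · subst hi
      have := Finsupp.single_le_iff.mp (hdegj ▸ hle)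
      exact ⟨hN.trans_le this, fun _ => this⟩
    · exact ⟨Finsupp.single_le_iff.mp (hdegi i hi ▸ hle), fun h => absurd h hi⟩
  have hdeg_apply : ∀ i i', i' ≠ i → m.degree (F i) i' = 0 := by
    intro i i' hi'
    obtain ⟨e, he⟩ : ∃ e, m.degree (F i) = Finsupp.single i e :=
      if hi : i = j then ⟨N, hi ▸ hdegj⟩ else ⟨1, hdegi i hi⟩
    rw [he, Finsupp.single_eq_of_ne hi']
  refine ⟨⟨?_, ?_, ?_, ?_⟩, ?_, ?_⟩
  · simpa using hF0
  · simpa [Set.range_subset_iff] using hFI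
  · refine span_eq_of_forall_exists_degree_le (m := m) (by simpa [Set.range_subset_iff] using hFI)
      (by simpa using hF0) fun f hf hf0 => ?_
    obtain ⟨i, hi⟩ := hdvd f hf hf0
    exact ⟨F i, by simp, hi⟩
  · intro f hf hf0
    obtain ⟨i, hi⟩ := hdvd f hf hf0
    exact ⟨F i, by simp, hi⟩
  · simp [lc_eq_leadingCoeff, hmonic]
  · simp only [Finset.mem_image, Finset.mem_univ, true_and, lm_eq_degree]
    rintro _ ⟨i, rfl⟩ _ ⟨i', rfl⟩ hne d hd hle
    have hi' : i' ≠ i := fun h => hne (h ▸ rfl)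
    obtain ⟨hpos, hN'⟩ := hlead i' d hle
    rcases htail i d hd with rfl | ⟨k, hk, rfl⟩
    · exact hpos.ne' (hdeg_apply i i' hi')
    · by_cases hij : i' = j
      · have := hN' hij
        simp at this
        omega
      · simp [Finsupp.single_eq_of_ne hij] at hpos

end ReducedBasis

theorem isReducedGroebnerBasis_lagrange {n : ℕ} {G L : Type*} [Fintype G] [Nonempty G]
    [Field L] {m : MonomialOrder (Fin n)} {j : Fin n}
    (hm : ∀ (k : ℕ) (i : Fin n), i ≠ j → Finsupp.single j k ≺[m] Finsupp.single i 1)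
    {P : G → Fin n → L} (hP : Function.Injective fun σ => P σ j)
    {F : Fin n → MvPolynomial (Fin n) L}
    (hFj : F j = (Lagrange.nodal Finset.univ fun σ => P σ j).toMvPolynomial j)
    (hFi : ∀ i ≠ j, F i =
      X i - (Lagrange.interpolate Finset.univ (fun σ => P σ j) fun σ => P σ i).toMvPolynomial j) :
    IsReducedGroebnerBasis m (vanishingIdeal L (Set.range P)) (Finset.univ.image F) := by
  have hdegj := hFj ▸ degree_toMvPolynomial_nodal m (j := j) fun σ => P σ j
  have hdegi : ∀ i ≠ j, m.degree (F i) = Finsupp.single i 1 :=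
    fun i hi => hFi i hi ▸ (degree_X_sub_toMvPolynomial hm hi _).1
  refine isReducedGroebnerBasis_of_degree_eq Fintype.card_pos (fun i => ?_) (fun i => ?_)
    hdegj hdegi (fun i d hd => ?_)
    fun f hf hf0 => exists_single_le_degree_of_mem_vanishingIdeal hm hP hf hf0
  all_goals by_cases hi : i = j
  · rw [hi, hFj]
    exact toMvPolynomial_nodal_mem_vanishingIdeal
  · rw [hFi i hi]
    exact X_sub_toMvPolynomial_interpolate_mem_vanishingIdeal hP i
  · rw [hi, hFj]
    exact leadingCoeff_toMvPolynomial_nodal m _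
  · rw [hFi i hi]
    exact (degree_X_sub_toMvPolynomial hm hi _).2
  · subst hi
    rw [hdegj]
    exact mem_support_toMvPolynomial_nodal (hFj ▸ hd)
  · rw [hdegi i hi]
    exact mem_support_X_sub_toMvPolynomial_interpolate hP i _ (hFi i hi ▸ hd)

lemma smul_left_injective_of_smul_eq_self {G α : Type*} [Group G] [MulAction G α] {x : α}
    (hx : ∀ σ : G, σ • x = x → σ = 1) : Function.Injective fun σ : G => σ • x := by
  intro σ τ hστ
  have h := hx (τ⁻¹ * σ) (by rw [mul_smul, show σ • x = τ • x from hστ, inv_smul_smul])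
  rwa [inv_mul_eq_one, eq_comm] at h

section Coefficients

variable {ι L : Type*} [Field L] {R : Subring L}

lemma coeff_mem_of_mem_range_map {f : MvPolynomial ι L} (hf : f ∈ (map R.subtype).range)
    (d : ι →₀ ℕ) : coeff d f ∈ R := by
  obtain ⟨g, rfl⟩ := hf
  rw [coeff_map]
  exact (coeff d g).2

lemma C_mem_range_map {x : L} (hx : x ∈ R) : (C x : MvPolynomial ι L) ∈ (map R.subtype).range :=
  ⟨C ⟨x, hx⟩, map_C _ _⟩

lemma X_mem_range_map (i : ι) : (X i : MvPolynomial ι L) ∈ (map R.subtype).range :=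
  ⟨X i, map_X _ _⟩

end Coefficients

section Discriminant

variable (G : Type*) {L : Type*} [Group G] [Fintype G] [Field L] [MulSemiringAction G L]

/-- Up to the sign `(-1) ^ (N * (N - 1) / 2)`, `N = |G|`, this is the discriminant of
`∏ σ, (Y - σ • x)`. -/
def orbitDiscr (x : L) : L :=
  ∏ p ∈ (Finset.univ ×ˢ Finset.univ).filter (fun p : G × G => p.1 ≠ p.2), (p.1 • x - p.2 • x)

variable {G} {x : L}

lemma orbitDiscr_eq_prod_prod_erase (x : L) :
    orbitDiscr G x = ∏ σ : G, ∏ τ ∈ Finset.univ.erase σ, (σ • x - τ • x) := by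
  rw [orbitDiscr, Finset.prod_filter, Finset.prod_product]
  refine Finset.prod_congr rfl fun σ _ => ?_
  rw [← Finset.prod_filter, Finset.filter_ne]

lemma smul_orbitDiscr (g : G) (x : L) : g • orbitDiscr G x = orbitDiscr G x := by
  rw [orbitDiscr, Finset.smul_prod', Finset.prod_filter, Finset.prod_filter,
    Finset.univ_product_univ]
  refine Fintype.prod_equiv ((Equiv.mulLeft g).prodCongr (Equiv.mulLeft g)) _ _ fun p => ?_
  simp [smul_sub, mul_smul]

lemma orbitDiscr_ne_zero (hx : Function.Injective fun σ : G => σ • x) : orbitDiscr G x ≠ 0 :=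
  Finset.prod_ne_zero_iff.mpr fun _ hp =>
    sub_ne_zero.mpr (hx.ne (Finset.mem_filter.mp hp).2)

variable {R : Subring L}

lemma orbitDiscr_mem (hR : ∀ σ : G, σ • x ∈ R) : orbitDiscr G x ∈ R :=
  prod_mem fun _ _ => sub_mem (hR _) (hR _)

lemma orbitDiscr_mul_prod_inv_mem (hx : Function.Injective fun σ : G => σ • x)
    (hR : ∀ σ : G, σ • x ∈ R) (σ : G) :
    orbitDiscr G x * ∏ τ ∈ Finset.univ.erase σ, (σ • x - τ • x)⁻¹ ∈ R := by
  have hσ : ∏ τ ∈ Finset.univ.erase σ, (σ • x - τ • x) ≠ 0 :=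
    Finset.prod_ne_zero_iff.mpr fun τ hτ =>
      sub_ne_zero.mpr (hx.ne (Finset.ne_of_mem_erase hτ).symm)
  rw [orbitDiscr_eq_prod_prod_erase, ← Finset.mul_prod_erase _ _ (Finset.mem_univ σ),
    Finset.prod_inv_distrib, mul_right_comm, mul_inv_cancel₀ hσ, one_mul]
  exact prod_mem fun _ _ => prod_mem fun _ _ => sub_mem (hR _) (hR _)

lemma C_orbitDiscr_mul_prod_mem_range_map {ι : Type*} (hx : Function.Injective fun σ : G => σ • x)
    (hR : ∀ σ : G, σ • x ∈ R) (σ : G) (j : ι) :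
    C (orbitDiscr G x) * ∏ τ ∈ Finset.univ.erase σ, (C ((σ • x - τ • x)⁻¹) * (X j - C (τ • x))) ∈
      (map R.subtype).range := by
  rw [Finset.prod_mul_distrib, ← map_prod, ← mul_assoc, ← map_mul]
  exact mul_mem (C_mem_range_map (orbitDiscr_mul_prod_inv_mem hx hR σ))
    (prod_mem fun τ _ => sub_mem (X_mem_range_map j) (C_mem_range_map (hR τ)))

end Discriminant

theorem statement7_general {L G : Type*} [Field L] [Group G] [Fintype G]
    [MulSemiringAction G L]
    {n : ℕ} (hn : 0 < n) (K : Subring L) (a : Fin n → L)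
    (R : Subring L) (hR : R = Subring.closure (↑K ∪ Set.range a))
    (hRstable : ∀ (σ : G), ∀ x ∈ R, σ • x ∈ R)
    -- `a_1` has trivial stabilizer
    (hstab : ∀ σ : G, σ • a ⟨0, hn⟩ = a ⟨0, hn⟩ → σ = 1)
    -- the monomial ordering satisfies `y_1^k < y_i` for all `i ≠ 1`, `k`
    (m : MonomialOrder (Fin n))
    (hm : ∀ (k : ℕ) (i : Fin n), i ≠ ⟨0, hn⟩ →
      (Finsupp.single (⟨0, hn⟩ : Fin n) k) ≺[m] (Finsupp.single i 1))
    -- the polynomials f_1 and f_i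
    (F : Fin n → MvPolynomial (Fin n) L)
    (hF1 : F ⟨0, hn⟩ = ∏ σ : G, (X (⟨0, hn⟩ : Fin n) - C (σ • a ⟨0, hn⟩)))
    (hFi : ∀ i : Fin n, i ≠ ⟨0, hn⟩ → F i =
      X i - ∑ σ : G, C (σ • a i) *
        ∏ τ ∈ Finset.univ.erase σ,
          (C ((σ • a ⟨0, hn⟩ - τ • a ⟨0, hn⟩)⁻¹) *
            (X (⟨0, hn⟩ : Fin n) - C (τ • a ⟨0, hn⟩))))
    -- the discriminant of f_1
    (a₀ : L)
    (ha₀ : a₀ = ∏ p ∈ (Finset.univ ×ˢ Finset.univ).filter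
        (fun p : G × G => p.1 ≠ p.2), (p.1 • a ⟨0, hn⟩ - p.2 • a ⟨0, hn⟩)) :
    IsReducedGroebnerBasis m (derksenIdeal G a) (Finset.univ.image F) ∧
    a₀ ∈ R ∧ (∀ σ : G, σ • a₀ = a₀) ∧ a₀ ≠ 0 ∧
    (∀ (i : Fin n) (d : Fin n →₀ ℕ), coeff d (C a₀ * F i) ∈ R) := by
  set j : Fin n := ⟨0, hn⟩
  have hinj : Function.Injective fun σ : G => σ • a j := smul_left_injective_of_smul_eq_self hstab
  have haR : ∀ (σ : G) (i : Fin n), σ • a i ∈ R := fun σ i =>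
    hRstable σ _ (hR ▸ Subring.subset_closure (Or.inr ⟨i, rfl⟩))
  have ha₀R : a₀ ∈ R := ha₀ ▸ orbitDiscr_mem fun σ => haR σ j
  refine ⟨?_, ha₀R, fun σ => ha₀ ▸ smul_orbitDiscr σ _, ha₀ ▸ orbitDiscr_ne_zero hinj,
    fun i d => coeff_mem_of_mem_range_map ?_ d⟩
  · rw [derksenIdeal_eq_vanishingIdeal]
    exact isReducedGroebnerBasis_lagrange hm hinj (by rw [hF1, toMvPolynomial_nodal])
      fun i hi => by rw [hFi i hi, toMvPolynomial_interpolate]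
  by_cases hi : i = j
  · rw [hi, hF1]
    exact mul_mem (C_mem_range_map ha₀R)
      (prod_mem fun σ _ => sub_mem (X_mem_range_map j) (C_mem_range_map (haR σ j)))
  · rw [hFi i hi, mul_sub, Finset.mul_sum]
    refine sub_mem (mul_mem (C_mem_range_map ha₀R) (X_mem_range_map i)) (sum_mem fun σ _ => ?_)
    rw [mul_left_comm, ha₀]
    exact mul_mem (C_mem_range_map (haR σ i))
      (C_orbitDiscr_mul_prod_mem_range_map hinj (fun τ => haR τ j) σ j)

/-- For a finite group `G` with trivial stabilizer of `a_1`,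
the explicitly given polynomials `f_1, …, f_n` form a reduced Gröbner basis of
the Derksen ideal for every monomial ordering with `y_1^k < y_i` (`i, k > 1`),
and multiplying by the discriminant `a₀` of `f_1` clears all denominators:
`a₀ · f_i ∈ R[y_1,…,y_n]`. -/
theorem statement7 {L G : Type*} [Field L] [Group G] [Fintype G]
    [MulSemiringAction G L]
    {n : ℕ} (hn : 0 < n) (K : Subring L) (a : Fin n → L)
    (hK : ∀ (σ : G), ∀ x ∈ K, σ • x = x)
    (R : Subring L) (hR : R = Subring.closure (↑K ∪ Set.range a))
    (hRstable : ∀ (σ : G), ∀ x ∈ R, σ • x ∈ R)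
    (hQuot : ∀ x : L, ∃ r ∈ R, ∃ s ∈ R, s ≠ 0 ∧ x = r / s)
    -- `a_1` has trivial stabilizer
    (hstab : ∀ σ : G, σ • a ⟨0, hn⟩ = a ⟨0, hn⟩ → σ = 1)
    -- the monomial ordering satisfies `y_1^k < y_i` for all `i ≠ 1`, `k`
    (m : MonomialOrder (Fin n))
    (hm : ∀ (k : ℕ) (i : Fin n), i ≠ ⟨0, hn⟩ →
      (Finsupp.single (⟨0, hn⟩ : Fin n) k) ≺[m] (Finsupp.single i 1))
    -- the polynomials f_1 and f_i
    (F : Fin n → MvPolynomial (Fin n) L)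
    (hF1 : F ⟨0, hn⟩ = ∏ σ : G, (X (⟨0, hn⟩ : Fin n) - C (σ • a ⟨0, hn⟩)))
    (hFi : ∀ i : Fin n, i ≠ ⟨0, hn⟩ → F i =
      X i - ∑ σ : G, C (σ • a i) *
        ∏ τ ∈ Finset.univ.erase σ,
          (C ((σ • a ⟨0, hn⟩ - τ • a ⟨0, hn⟩)⁻¹) *
            (X (⟨0, hn⟩ : Fin n) - C (τ • a ⟨0, hn⟩))))
    -- the discriminant of f_1
    (a₀ : L)
    (ha₀ : a₀ = ∏ p ∈ (Finset.univ ×ˢ Finset.univ).filter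
        (fun p : G × G => p.1 ≠ p.2), (p.1 • a ⟨0, hn⟩ - p.2 • a ⟨0, hn⟩)) :
    IsReducedGroebnerBasis m (derksenIdeal G a) (Finset.univ.image F) ∧
    a₀ ∈ R ∧ (∀ σ : G, σ • a₀ = a₀) ∧ a₀ ≠ 0 ∧
    (∀ (i : Fin n) (d : Fin n →₀ ℕ), coeff d (C a₀ * F i) ∈ R) :=
  statement7_general hn K a R hR hRstable hstab m hm F hF1 hFi a₀ ha₀

end Derksen
end
end

section
/- Under the Assumption: if L^G = Quot(R^G), then there exists a nonzero invariant a ∈ R^G such that A ⊆ R_a. Conversely, if L^G = Quot(A) (which is guaranteed when E is tamely extended), then the existence of a nonzero a ∈ R^G with A ⊆ R_a implies L^G = Quot(R^G). -/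
open MvPolynomial
noncomputable section

namespace Derksen

/-- The localization `S_u = S[u⁻¹]` of a subring `S ⊆ L` at an element `u`,
realized as a subring of `L`. -/
def locAt {L : Type*} [Field L] (S : Subring L) (u : L) : Subring L :=
  Subring.closure (↑S ∪ {u⁻¹})

lemma mem_fixed_iff {L G : Type*} [Field L] [Group G] [MulSemiringAction G L] {x : L} :
    x ∈ FixedPoints.subfield G L ↔ ∀ σ : G, σ • x = x := by
  have h : x ∈ FixedPoints.subfield G L ↔ x ∈ MulAction.fixedPoints G L := Iff.rfl
  rw [h]
  exact MulAction.mem_fixedPoints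

lemma lm_mem_support {n : ℕ} (m : MonomialOrder (Fin n)) {S : Type*} [CommSemiring S]
    {f : MvPolynomial (Fin n) S} (hf : f ≠ 0) : lm m f ∈ f.support := by
  obtain ⟨d, hd, hsup⟩ := Finset.exists_mem_eq_sup f.support
    (Finset.nonempty_iff_ne_empty.mpr (fun h => hf (MvPolynomial.support_eq_empty.mp h)))
    (fun d => m.toSyn d)
  rw [lm, hsup, AddEquiv.symm_apply_apply]
  exact hd

/-- Key lemma: the elements of a reduced Gröbner basis of a `G`-stable ideal are
fixed by the coefficientwise `G`-action. -/
lemma polyAct_eq_self {L G : Type*} [Field L] [Group G] [MulSemiringAction G L]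
    {n : ℕ} {E : Ideal (MvPolynomial (Fin n) L)}
    (hEstable : ∀ (σ : G), ∀ f ∈ E, polyAct G σ f ∈ E)
    {m : MonomialOrder (Fin n)} {B : Finset (MvPolynomial (Fin n) L)}
    (hB : IsReducedGroebnerBasis m E B) (σ : G) {g : MvPolynomial (Fin n) L}
    (hg : g ∈ B) : polyAct G σ g = g := by
  by_contra hne
  set φ := MulSemiringAction.toRingHom G L σ with hφ
  have hφinj : Function.Injective φ := φ.injective
  set f := polyAct G σ g - g with hf
  have hfE : f ∈ E := E.sub_mem (hEstable σ g (hB.subset hg)) (hB.subset hg)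
  have hfne : f ≠ 0 := sub_ne_zero.mpr hne
  have hsupp : f.support ⊆ g.support := by
    intro d hd
    rw [MvPolynomial.mem_support_iff] at hd ⊢
    intro h0
    apply hd
    simp [hf, polyAct, MvPolynomial.coeff_map, h0]
  have hlmg_not : lm m g ∉ f.support := by
    rw [MvPolynomial.notMem_support_iff]
    have hmonic := hB.monic g hg
    rw [lc] at hmonic
    simp [hf, polyAct, MvPolynomial.coeff_map, hmonic]
  obtain ⟨g', hg', hdvd⟩ := hB.lm_dvd f hfE hfne
  have hlmf_supp : lm m f ∈ f.support := lm_mem_support m hfne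
  by_cases hgg : g' = g
  · subst hgg
    have h1 : m.toSyn (lm m g') ≤ m.toSyn (lm m f) := m.toSyn_monotone hdvd
    have h2 : m.toSyn (lm m f) ≤ m.toSyn (lm m g') := by
      rw [lm, lm, AddEquiv.apply_symm_apply, AddEquiv.apply_symm_apply]
      exact Finset.sup_mono hsupp
    have heq : lm m f = lm m g' := m.toSyn.injective (le_antisymm h2 h1)
    exact hlmg_not (heq ▸ hlmf_supp)
  · exact hB.reduced g hg g' hg' hgg (lm m f) (hsupp hlmf_supp) hdvd

/-- Under the Assumption: if `L^G = Quot(R^G)`, then there is a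
nonzero invariant `a₀ ∈ R^G` with `A ⊆ R_{a₀}`; conversely, if `L^G = Quot(A)`,
then the existence of such an `a₀` implies `L^G = Quot(R^G)`. -/
theorem statement9 {L G : Type*} [Field L] [Group G] [MulSemiringAction G L]
    {n : ℕ} (K : Subring L) (a : Fin n → L)
    (hK : ∀ (σ : G), ∀ x ∈ K, σ • x = x)
    (R : Subring L) (hR : R = Subring.closure (↑K ∪ Set.range a))
    (hRstable : ∀ (σ : G), ∀ x ∈ R, σ • x ∈ R)
    (hQuot : ∀ x : L, ∃ r ∈ R, ∃ s ∈ R, s ≠ 0 ∧ x = r / s)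
    (E : Ideal (MvPolynomial (Fin n) L))
    (hEproper : E ≠ ⊤)
    (hDE : derksenIdeal G a ≤ E)
    (hEstable : ∀ (σ : G), ∀ f ∈ E, polyAct G σ f ∈ E)
    (m : MonomialOrder (Fin n)) (B : Finset (MvPolynomial (Fin n) L))
    (hB : IsReducedGroebnerBasis m E B)
    -- the invariant ring R^G
    (RG : Subring L) (hRG : RG = R ⊓ (FixedPoints.subfield G L).toSubring) :
    -- if L^G = Quot(R^G) then a₀ exists …
    (((FixedPoints.subfield G L : Set L) =
        {x : L | ∃ b ∈ RG, ∃ c ∈ RG, c ≠ 0 ∧ x = b / c}) →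
      ∃ a₀ : L, a₀ ∈ RG ∧ a₀ ≠ 0 ∧
        (coeffAlgebra K B : Set L) ⊆ ↑(locAt R a₀)) ∧
    -- … and conversely, provided L^G = Quot(A)
    (((FixedPoints.subfield G L : Set L) =
        {x : L | ∃ b ∈ coeffAlgebra K B, ∃ c ∈ coeffAlgebra K B, c ≠ 0 ∧ x = b / c}) →
      (∃ a₀ : L, a₀ ∈ RG ∧ a₀ ≠ 0 ∧
        (coeffAlgebra K B : Set L) ⊆ ↑(locAt R a₀)) →
      (FixedPoints.subfield G L : Set L) =
        {x : L | ∃ b ∈ RG, ∃ c ∈ RG, c ≠ 0 ∧ x = b / c}) := by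
  classical
  have hRG_le_R : RG ≤ R := by rw [hRG]; exact inf_le_left
  have hRG_fix : ∀ x ∈ RG, ∀ σ : G, σ • x = x := by
    intro x hx σ
    rw [hRG] at hx
    exact mem_fixed_iff.mp ((Subfield.mem_toSubring _ _).mp hx.2) σ
  have hK_le_R : (K : Set L) ⊆ (R : Set L) := by
    rw [hR]; exact fun x hx => Subring.subset_closure (Or.inl hx)
  set S : Set L := {x : L | ∃ g ∈ B, ∃ d : Fin n →₀ ℕ, coeff d g = x} with hSdef
  have hSfix : ∀ x ∈ S, ∀ σ : G, σ • x = x := by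
    rintro x ⟨g, hg, d, rfl⟩ σ
    have h := congrArg (MvPolynomial.coeff d) (polyAct_eq_self hEstable hB σ hg)
    simpa [polyAct, MvPolynomial.coeff_map] using h
  have hAfix : ∀ x ∈ coeffAlgebra K B, x ∈ FixedPoints.subfield G L := by
    intro x hx
    have hle : coeffAlgebra K B ≤ (FixedPoints.subfield G L).toSubring := by
      apply Subring.closure_le.mpr
      rintro y (hy | hy)
      · exact (Subfield.mem_toSubring _ _).mpr (mem_fixed_iff.mpr (fun σ => hK σ y hy))
      · exact (Subfield.mem_toSubring _ _).mpr (mem_fixed_iff.mpr (hSfix y hy))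
    exact (Subfield.mem_toSubring _ _).mp (hle hx)
  have hSfin : S.Finite := by
    have hsub : S ⊆ ⋃ g ∈ (B : Set (MvPolynomial (Fin n) L)),
        insert (0 : L) ((fun d => MvPolynomial.coeff d g) '' (g.support : Set (Fin n →₀ ℕ))) := by
      rintro x ⟨g, hg, d, rfl⟩
      refine Set.mem_biUnion hg ?_
      by_cases hd : d ∈ g.support
      · exact Set.mem_insert_of_mem _ ⟨d, hd, rfl⟩
      · rw [MvPolynomial.notMem_support_iff] at hd
        rw [hd]; exact Set.mem_insert _ _
    exact Set.Finite.subset (Set.Finite.biUnion B.finite_toSet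
      (fun g _ => ((g.support.finite_toSet).image _).insert 0)) hsub
  constructor
  · intro h1
    have hchoice : ∀ x ∈ S, ∃ b c : L, b ∈ RG ∧ c ∈ RG ∧ c ≠ 0 ∧ x = b / c := by
      intro x hx
      have hxm : x ∈ (FixedPoints.subfield G L : Set L) := mem_fixed_iff.mpr (hSfix x hx)
      rw [h1] at hxm
      obtain ⟨b, hb, c, hc, hcne, hxe⟩ := hxm
      exact ⟨b, c, hb, hc, hcne, hxe⟩
    choose! bf cf hbf hcf hcne hxe using hchoice
    set F := hSfin.toFinset with hF
    have hmemF : ∀ x ∈ F, x ∈ S := fun x hx => hSfin.mem_toFinset.mp hx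
    set a₀ := ∏ x ∈ F, cf x with ha₀
    have ha₀RG : a₀ ∈ RG := prod_mem (fun x hx => hcf x (hmemF x hx))
    have ha₀ne : a₀ ≠ 0 := Finset.prod_ne_zero_iff.mpr (fun x hx => hcne x (hmemF x hx))
    refine ⟨a₀, ha₀RG, ha₀ne, ?_⟩
    have hRloc : ∀ y ∈ R, y ∈ locAt R a₀ := fun y hy => Subring.subset_closure (Or.inl hy)
    have hinv : a₀⁻¹ ∈ locAt R a₀ := Subring.subset_closure (Or.inr rfl)
    have hle : coeffAlgebra K B ≤ locAt R a₀ := by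
      apply Subring.closure_le.mpr
      rintro y (hy | hy)
      · exact hRloc y (hK_le_R hy)
      · have hyS : y ∈ S := hy
        have hyF : y ∈ F := hSfin.mem_toFinset.mpr hyS
        have hprod : a₀ = cf y * ∏ x ∈ F.erase y, cf x := (Finset.mul_prod_erase F cf hyF).symm
        have herased_ne : (∏ x ∈ F.erase y, cf x) ≠ 0 :=
          Finset.prod_ne_zero_iff.mpr
            (fun x hx => hcne x (hmemF x (Finset.mem_of_mem_erase hx)))
        have hcyne := hcne y hyS
        have hyeq : y = bf y * (∏ x ∈ F.erase y, cf x) * a₀⁻¹ := by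
          conv_lhs => rw [hxe y hyS]
          rw [hprod]
          field_simp
        rw [hyeq]
        exact Subring.mul_mem _ (Subring.mul_mem _ (hRloc _ (hRG_le_R (hbf y hyS)))
          (prod_mem (fun x hx => hRloc _
            (hRG_le_R (hcf x (hmemF x (Finset.mem_of_mem_erase hx))))))) hinv
    exact fun x hx => hle hx
  · rintro h2 ⟨a₀, ha₀RG, ha₀ne, hsub⟩
    have ha₀R : a₀ ∈ R := hRG_le_R ha₀RG
    have ha₀fix : ∀ σ : G, σ • a₀ = a₀ := hRG_fix a₀ ha₀RG
    let T : Subring L :=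
      { carrier := {y : L | ∃ k : ℕ, y * a₀ ^ k ∈ R}
        one_mem' := ⟨0, by simpa using R.one_mem⟩
        zero_mem' := ⟨0, by simpa using R.zero_mem⟩
        mul_mem' := by
          rintro y z ⟨k, hk⟩ ⟨j, hj⟩
          refine ⟨k + j, ?_⟩
          rw [pow_add, show y * z * (a₀ ^ k * a₀ ^ j) = (y * a₀ ^ k) * (z * a₀ ^ j) by ring]
          exact mul_mem hk hj
        add_mem' := by
          rintro y z ⟨k, hk⟩ ⟨j, hj⟩
          refine ⟨k + j, ?_⟩
          rw [pow_add, show (y + z) * (a₀ ^ k * a₀ ^ j)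
            = (y * a₀ ^ k) * a₀ ^ j + (z * a₀ ^ j) * a₀ ^ k by ring]
          exact add_mem (mul_mem hk (pow_mem ha₀R j)) (mul_mem hj (pow_mem ha₀R k))
        neg_mem' := by
          rintro y ⟨k, hk⟩
          exact ⟨k, by rw [neg_mul]; exact neg_mem hk⟩ }
    have hloc : (locAt R a₀ : Set L) ⊆ (T : Set L) := by
      intro y hy
      refine Subring.closure_le.mpr ?_ hy
      rintro z (hz | hz)
      · exact ⟨0, by simpa using hz⟩
      · rw [Set.mem_singleton_iff] at hz
        subst hz
        exact ⟨1, by rw [pow_one, inv_mul_cancel₀ ha₀ne]; exact R.one_mem⟩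
    apply Set.Subset.antisymm
    · intro x hx
      have hx' : x ∈ {x : L | ∃ b ∈ coeffAlgebra K B, ∃ c ∈ coeffAlgebra K B,
          c ≠ 0 ∧ x = b / c} := h2 ▸ hx
      obtain ⟨b, hbA, c, hcA, hcne, hxe⟩ := hx'
      obtain ⟨k, hbk⟩ := hloc (hsub hbA)
      obtain ⟨j, hcj⟩ := hloc (hsub hcA)
      refine ⟨b * a₀ ^ (k + j), ?_, c * a₀ ^ (k + j), ?_, ?_, ?_⟩
      · rw [hRG]
        constructor
        · rw [show b * a₀ ^ (k + j) = (b * a₀ ^ k) * a₀ ^ j by rw [pow_add]; ring]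
          exact mul_mem hbk (pow_mem ha₀R j)
        · refine (Subfield.mem_toSubring _ _).mpr (mem_fixed_iff.mpr (fun σ => ?_))
          rw [smul_mul', smul_pow', ha₀fix σ, mem_fixed_iff.mp (hAfix b hbA) σ]
      · rw [hRG]
        constructor
        · rw [show c * a₀ ^ (k + j) = (c * a₀ ^ j) * a₀ ^ k by rw [pow_add]; ring]
          exact mul_mem hcj (pow_mem ha₀R k)
        · refine (Subfield.mem_toSubring _ _).mpr (mem_fixed_iff.mpr (fun σ => ?_))
          rw [smul_mul', smul_pow', ha₀fix σ, mem_fixed_iff.mp (hAfix c hcA) σ]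
      · exact mul_ne_zero hcne (pow_ne_zero _ ha₀ne)
      · rw [hxe, mul_div_mul_right _ _ (pow_ne_zero _ ha₀ne)]
    · rintro x ⟨b, hb, c, hc, hcne, rfl⟩
      have hbF : b ∈ FixedPoints.subfield G L := mem_fixed_iff.mpr (hRG_fix b hb)
      have hcF : c ∈ FixedPoints.subfield G L := mem_fixed_iff.mpr (hRG_fix c hc)
      exact div_mem hbF hcF

end Derksen
end
end
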